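/- Let m, n ≥ 1, let C be a real symmetric m×m matrix and let S and H be real symmetric n×n matrices. Then λmax(C ⊗ H + I_m ⊗ S) = max over the eigenvalues μ of C of λmax(S + μ·H), where ⊗ denotes the Kronecker product and I_m is the m×m identity matrix. That is, λmax(C ⊗ H + I_m ⊗ S) ≥ λmax(S + μ·H) for every eigenvalue μ of C, and equality λmax(C ⊗ H + I_m ⊗ S) = λmax(S + μ·H) holds for some eigenvalue μ of C. -/

import Mathlib

open Matrix
open scoped Kronecker

/-- The largest eigenvalue of a real matrix, as the supremum of its (real) spectrum. -/
noncomputable def lamMax {n : Type*} [Fintype n] [DecidableEq n] (M : Matrix n n ℝ) : ℝ :=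
  sSup (spectrum ℝ M)

/-!
Diagonalize `C = V D Vᵀ` with `V` orthogonal. Conjugating by the orthogonal matrix `V ⊗ I`
turns `C ⊗ H + I ⊗ S` into `D ⊗ H + I ⊗ S`, which after swapping the two tensor factors is block
diagonal with blocks `S + μ H`, `μ` running over the eigenvalues of `C`. Hence the spectrum of
`C ⊗ H + I ⊗ S` is the union of the spectra of the `S + μ H`, and the largest element of a
finite union of finite nonempty sets is the largest of their largest elements.
-/

namespace Matrix

section Spectrum

variable {ι κ R : Type*} [Fintype ι] [DecidableEq ι] [Fintype κ] [DecidableEq κ] [CommRing R]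

theorem spectrum_reindex (e : ι ≃ κ) (A : Matrix ι ι R) :
    spectrum R (reindex e e A) = spectrum R A :=
  AlgEquiv.spectrum_eq (reindexAlgEquiv R R e) A

theorem spectrum_blockDiagonal (M : κ → Matrix ι ι R) :
    spectrum R (blockDiagonal M) = ⋃ k, spectrum R (M k) := by
  ext r
  have hsub : algebraMap R _ r - blockDiagonal M = blockDiagonal (algebraMap R _ r - M) := by
    rw [blockDiagonal_sub, Algebra.algebraMap_eq_smul_one, Algebra.algebraMap_eq_smul_one,
      blockDiagonal_smul, blockDiagonal_one]
  simp only [spectrum.mem_iff, hsub, isUnit_iff_isUnit_det, det_blockDiagonal,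
    IsUnit.prod_univ_iff, Set.mem_iUnion, not_forall]
  rfl

theorem spectrum_diagonal_kronecker_add_one_kronecker (d : ι → R) (S H : Matrix κ κ R) :
    spectrum R (diagonal d ⊗ₖ H + 1 ⊗ₖ S) = ⋃ i, spectrum R (S + d i • H) := by
  rw [diagonal_kronecker, one_kronecker, ← coe_reindexAddEquiv, ← map_add, coe_reindexAddEquiv,
    spectrum_reindex, ← blockDiagonal_add, spectrum_blockDiagonal]
  simp only [Pi.add_apply, add_comm]

theorem IsHermitian.spectrum_kronecker_add_one_kronecker {C : Matrix ι ι ℝ} (hC : C.IsHermitian)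
    (S H : Matrix κ κ ℝ) :
    spectrum ℝ (C ⊗ₖ H + 1 ⊗ₖ S) = ⋃ μ ∈ spectrum ℝ C, spectrum ℝ (S + μ • H) := by
  set V := hC.eigenvectorUnitary
  set U : unitary (Matrix (ι × κ) (ι × κ) ℝ) :=
    ⟨V ⊗ₖ 1, kronecker_mem_unitary V.2 (unitary _).one_mem⟩
  have hC_eq : C = V * diagonal hC.eigenvalues * star (V : Matrix ι ι ℝ) := by
    simpa using hC.spectral_theorem
  have hconj : C ⊗ₖ H + 1 ⊗ₖ S = (U : Matrix (ι × κ) (ι × κ) ℝ) *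
      (diagonal hC.eigenvalues ⊗ₖ H + 1 ⊗ₖ S) * (star U : Matrix (ι × κ) (ι × κ) ℝ) := by
    simp only [U, star_eq_conjTranspose, conjTranspose_kronecker, conjTranspose_one]
    rw [mul_add, add_mul, ← mul_kronecker_mul, ← mul_kronecker_mul, ← mul_kronecker_mul,
      ← mul_kronecker_mul, ← star_eq_conjTranspose, ← hC_eq]
    simp only [one_mul, mul_one, Unitary.mul_star_self_of_mem V.2]
  rw [hconj, Unitary.spectrum_star_right_conjugate, spectrum_diagonal_kronecker_add_one_kronecker,
    hC.spectrum_real_eq_range_eigenvalues, Set.biUnion_range]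

end Spectrum

theorem IsHermitian.kronecker {ι κ α : Type*} [CommSemiring α] [StarRing α]
    {A : Matrix ι ι α} {B : Matrix κ κ α} (hA : A.IsHermitian) (hB : B.IsHermitian) :
    (A ⊗ₖ B).IsHermitian := by
  rw [IsHermitian, conjTranspose_kronecker, hA.eq, hB.eq]

end Matrix

section LamMax

variable {ι : Type*} [Fintype ι] [DecidableEq ι] {A : Matrix ι ι ℝ}

theorem le_lamMax_of_mem_spectrum {μ : ℝ} (hμ : μ ∈ spectrum ℝ A) : μ ≤ lamMax A :=
  le_csSup (finite_spectrum A).bddAbove hμ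

theorem Matrix.IsHermitian.lamMax_mem_spectrum [Nonempty ι] (hA : A.IsHermitian) :
    lamMax A ∈ spectrum ℝ A := by
  refine Set.Nonempty.csSup_mem ?_ (finite_spectrum A)
  rw [hA.spectrum_real_eq_range_eigenvalues]
  exact Set.range_nonempty _

end LamMax

/-- For `m, n ≥ 1`, a real symmetric `m × m` matrix `C` and real symmetric
`n × n` matrices `S` and `H`, the largest eigenvalue of `C ⊗ H + I_m ⊗ S` equals the maximum
over the eigenvalues `μ` of `C` of `λmax (S + μ • H)`: it is an upper bound for all such
values, and it is attained at some eigenvalue `μ` of `C`. -/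
theorem lamMax_kronecker_eq_max_over_spectrum
    {m n : ℕ} (hm : 1 ≤ m) (hn : 1 ≤ n)
    (C : Matrix (Fin m) (Fin m) ℝ) (S H : Matrix (Fin n) (Fin n) ℝ)
    (hC : C.IsSymm) (hS : S.IsSymm) (hH : H.IsSymm) :
    (∀ μ ∈ spectrum ℝ C,
        lamMax (S + μ • H) ≤ lamMax (C ⊗ₖ H + (1 : Matrix (Fin m) (Fin m) ℝ) ⊗ₖ S)) ∧
      (∃ μ ∈ spectrum ℝ C,
        lamMax (C ⊗ₖ H + (1 : Matrix (Fin m) (Fin m) ℝ) ⊗ₖ S) = lamMax (S + μ • H)) := by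
  have : Nonempty (Fin m) := ⟨⟨0, hm⟩⟩
  have : Nonempty (Fin n) := ⟨⟨0, hn⟩⟩
  rw [← isHermitian_iff_isSymm] at hC hS hH
  have hspec := hC.spectrum_kronecker_add_one_kronecker S H
  have hK : (C ⊗ₖ H + (1 : Matrix (Fin m) (Fin m) ℝ) ⊗ₖ S).IsHermitian :=
    (hC.kronecker hH).add (isHermitian_one.kronecker hS)
  have upper : ∀ μ ∈ spectrum ℝ C,
      lamMax (S + μ • H) ≤ lamMax (C ⊗ₖ H + (1 : Matrix (Fin m) (Fin m) ℝ) ⊗ₖ S) :=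
    fun μ hμ => le_lamMax_of_mem_spectrum <|
      hspec ▸ Set.mem_biUnion hμ (hS.add (hH.smul (IsSelfAdjoint.all μ))).lamMax_mem_spectrum
  obtain ⟨μ, hμ, hmem⟩ := Set.mem_iUnion₂.1 (hspec ▸ hK.lamMax_mem_spectrum)
  exact ⟨upper, μ, hμ, le_antisymm (le_lamMax_of_mem_spectrum hmem) (upper μ hμ)⟩
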